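/- Let L > 0, ξ = √(L²+4), t₁ = L+2+ξ, t₂ = L+2−ξ, φ_n = t₁^n + t₂^n, ψ_n = t₁^n − t₂^n. Define r_{−1} = −(L+1) and r_n = −(α̃_n + β̃_n/r_{n−1}) where α̃_n = −1 + ψ_{n+2}/(2ψ_{n+1}) + 2L·ψ_{n+1}/ψ_{n+2} and β̃_n = L·ψ_n·ψ_{n+2}/ψ_{n+1}² for n ≥ 1, β̃_0 = L(L+2). Then for all n ≥ 0: r_n = −(ψ_{n+1}/ψ_{n+2})·(Lψ_{n+2} + ξφ_{n+2})/(Lψ_{n+1} + ξφ_{n+1}). -/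

import Mathlib

/-!
With `t₁, t₂ = L + 2 ± ξ` the roots of `x² - 2(L+2)x + 4L`, one has `Lψₖ + ξφₖ = ψₖ₊₁ - 2ψₖ`, so
the claimed closed form only involves the sequence `ψ`, which starts at `ψ₀ = 0` and satisfies
`ψₖ₊₂ = 2(L+2)ψₖ₊₁ - 4Lψₖ`. The closed form then propagates along the recursion for `r`: each
step is a rational identity in consecutive terms of `ψ` that holds modulo this linear recurrence.
-/

section Recursion

variable (L : ℝ)

theorem closed_form_recursion_base {b c d : ℝ} (hb : b ≠ 0) (hc₀ : c ≠ 0) (hcb : c - 2 * b ≠ 0)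
    (hc : c = 2 * (L + 2) * b) (hd : d = 2 * (L + 2) * c - 4 * L * b) :
    -((-1 + c / (2 * b) + 2 * L * b / c) + L * (L + 2) / (-(L + 1))) =
      -(b / c) * (d - 2 * c) / (c - 2 * b) := by
  have hL₁ : L + 1 ≠ 0 := fun h => hcb (by linear_combination hc + 2 * b * h)
  subst hd
  field_simp
  subst hc
  ring

theorem closed_form_recursion_step {a b c d : ℝ} (ha : a ≠ 0) (hb : b ≠ 0) (hc₀ : c ≠ 0)
    (hcb : c - 2 * b ≠ 0)
    (hc : c = 2 * (L + 2) * b - 4 * L * a) (hd : d = 2 * (L + 2) * c - 4 * L * b) :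
    -((-1 + c / (2 * b) + 2 * L * b / c) +
        L * a * c / b ^ 2 / (-(a / b) * (c - 2 * b) / (b - 2 * a))) =
      -(b / c) * (d - 2 * c) / (c - 2 * b) := by
  subst hd
  field_simp
  linear_combination (-c ^ 2) * hc

theorem closed_form_of_recursion (ψ : ℕ → ℝ) (r : ℤ → ℝ) (hψ₀ : ψ 0 = 0)
    (hψ : ∀ k, ψ (k + 2) = 2 * (L + 2) * ψ (k + 1) - 4 * L * ψ k)
    (hψ_ne : ∀ k, ψ (k + 1) ≠ 0) (hψ_sub_ne : ∀ k, ψ (k + 1) - 2 * ψ k ≠ 0)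
    (hrm1 : r (-1) = -(L + 1))
    (hrec : ∀ n : ℕ, r n =
      -((-1 + ψ (n + 2) / (2 * ψ (n + 1)) + 2 * L * ψ (n + 1) / ψ (n + 2)) +
        (if n = 0 then L * (L + 2) else L * ψ n * ψ (n + 2) / ψ (n + 1) ^ 2) / r (n - 1)))
    (n : ℕ) :
    r n = -(ψ (n + 1) / ψ (n + 2)) * (ψ (n + 3) - 2 * ψ (n + 2)) / (ψ (n + 2) - 2 * ψ (n + 1)) := by
  induction n with
  | zero =>
    rw [hrec 0, if_pos rfl, Nat.cast_zero, zero_sub, hrm1]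
    exact closed_form_recursion_base L (hψ_ne 0) (hψ_ne 1) (hψ_sub_ne 1) (by rw [hψ 0, hψ₀]; ring)
      (hψ 1)
  | succ m ih =>
    rw [hrec (m + 1), if_neg m.succ_ne_zero, Nat.cast_succ, add_sub_cancel_right, ih]
    exact closed_form_recursion_step L (hψ_ne m) (hψ_ne (m + 1)) (hψ_ne (m + 2)) (hψ_sub_ne (m + 2))
      (hψ (m + 1)) (hψ (m + 2))

end Recursion

theorem r_closed_form (L : ℝ) (hL : 0 < L)
    (r : ℤ → ℝ)
    (hrm1 : r (-1) = -(L + 1))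
    (hrec : ∀ n : ℕ, r n =
      -(((-1) + ((L + 2 + Real.sqrt (L ^ 2 + 4)) ^ (n + 2) - (L + 2 - Real.sqrt (L ^ 2 + 4)) ^ (n + 2)) /
            (2 * ((L + 2 + Real.sqrt (L ^ 2 + 4)) ^ (n + 1) - (L + 2 - Real.sqrt (L ^ 2 + 4)) ^ (n + 1))) +
          2 * L * ((L + 2 + Real.sqrt (L ^ 2 + 4)) ^ (n + 1) - (L + 2 - Real.sqrt (L ^ 2 + 4)) ^ (n + 1)) /
            ((L + 2 + Real.sqrt (L ^ 2 + 4)) ^ (n + 2) - (L + 2 - Real.sqrt (L ^ 2 + 4)) ^ (n + 2))) +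
        (if n = 0 then L * (L + 2) else
          L * ((L + 2 + Real.sqrt (L ^ 2 + 4)) ^ n - (L + 2 - Real.sqrt (L ^ 2 + 4)) ^ n) *
            ((L + 2 + Real.sqrt (L ^ 2 + 4)) ^ (n + 2) - (L + 2 - Real.sqrt (L ^ 2 + 4)) ^ (n + 2)) /
            ((L + 2 + Real.sqrt (L ^ 2 + 4)) ^ (n + 1) - (L + 2 - Real.sqrt (L ^ 2 + 4)) ^ (n + 1)) ^ 2) /
          r (n - 1))) :
    let ξ := Real.sqrt (L ^ 2 + 4)
    let t₁ := L + 2 + ξ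
    let t₂ := L + 2 - ξ
    let φ : ℕ → ℝ := fun n => t₁ ^ n + t₂ ^ n
    let ψ : ℕ → ℝ := fun n => t₁ ^ n - t₂ ^ n
    ∀ n : ℕ, r n = -(ψ (n + 1) / ψ (n + 2)) *
      (L * ψ (n + 2) + ξ * φ (n + 2)) / (L * ψ (n + 1) + ξ * φ (n + 1)) := by
  intro ξ t₁ t₂ φ ψ n
  have hξ : ξ ^ 2 = L ^ 2 + 4 := Real.sq_sqrt (by positivity)
  have hξ_pos : 0 < ξ := Real.sqrt_pos.2 (by positivity)
  have ht₂ : 0 < t₂ := by nlinarith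
  have ht : t₂ < t₁ := by linarith
  have hψ_pos : ∀ k, 0 < ψ (k + 1) := fun k => sub_pos.2 (pow_lt_pow_left₀ ht ht₂.le k.succ_ne_zero)
  have hD : ∀ k, L * ψ k + ξ * φ k = ψ (k + 1) - 2 * ψ k := fun k => by
    simp only [ψ, φ, t₁, t₂]
    ring
  have hD_pos : ∀ k, 0 < ψ (k + 1) - 2 * ψ k := fun k => by
    rw [← hD]
    have : 0 ≤ ψ k := sub_nonneg.2 (pow_le_pow_left₀ ht₂.le ht.le k)
    have : 0 < φ k := by positivity
    positivity
  have hψ : ∀ k, ψ (k + 2) = 2 * (L + 2) * ψ (k + 1) - 4 * L * ψ k := fun k => by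
    simp only [ψ, t₁, t₂]
    linear_combination ((L + 2 + ξ) ^ k - (L + 2 - ξ) ^ k) * hξ
  rw [hD, hD]
  exact closed_form_of_recursion L ψ r (sub_self _) hψ (fun k => (hψ_pos k).ne')
    (fun k => (hD_pos k).ne') hrm1 hrec n
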